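/- Local estimate for Riesz potentials of compactly supported data: if 0 < α < d, β ∈ (d−α, d], Q is an open cube with center x₀, and f is measurable with supp f ⊆ 2Q, then I_α f ∈ L¹(Q; H^β_∞) and ∫_Q |I_α f| dH^β_∞ ≤ C ℓ(Q)^β M_α f(x₀), with C = C(d,α,β). -/

import Mathlib

open MeasureTheory Set
open scoped ENNReal NNReal

noncomputable section

/-- `ℝ^d` with the Euclidean metric. -/
abbrev Rd (d : ℕ) := EuclideanSpace ℝ (Fin d)

/-- Coerce a plain function to a point of `ℝ^d`. -/
def toRd (d : ℕ) (a : Fin d → ℝ) : Rd d := WithLp.toLp 2 a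

/-- The normalization constant `ω_β = π^{β/2}/Γ(β/2+1)`. -/
def omegaConst (β : ℝ) : ℝ := Real.pi ^ (β / 2) / Real.Gamma (β / 2 + 1)

/-- The Hausdorff content `H^β_∞` in `ℝ^d`, via countable covers by balls. -/
def hContent (d : ℕ) (β : ℝ) (E : Set (Rd d)) : ℝ≥0∞ :=
  ⨅ (c : ℕ → Rd d × ℝ) (_ : E ⊆ ⋃ i, Metric.ball (c i).1 (c i).2),
    ∑' i, ENNReal.ofReal (omegaConst β * (c i).2 ^ β)

/-- The Choquet integral of a real-valued (nonnegative) function `g` over `Ω`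
with respect to a set function `H`. -/
def choquet (d : ℕ) (H : Set (Rd d) → ℝ≥0∞) (Ω : Set (Rd d)) (g : Rd d → ℝ) : ℝ≥0∞ :=
  ∫⁻ t in Set.Ioi (0 : ℝ), H {x | x ∈ Ω ∧ t < g x}

/-- The Choquet integral of an `ℝ≥0∞`-valued function `g` over `Ω`
with respect to a set function `H`. -/
def choquetE (d : ℕ) (H : Set (Rd d) → ℝ≥0∞) (Ω : Set (Rd d)) (g : Rd d → ℝ≥0∞) : ℝ≥0∞ :=
  ∫⁻ t in Set.Ioi (0 : ℝ), H {x | x ∈ Ω ∧ ENNReal.ofReal t < g x}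

/-- Closed axis-parallel cube with corner `a` and side length `l`. -/
def cubeSet (d : ℕ) (a : Fin d → ℝ) (l : ℝ) : Set (Rd d) :=
  {y | ∀ i, a i ≤ y i ∧ y i ≤ a i + l}

/-- Open axis-parallel cube with corner `a` and side length `l`. -/
def cubeO (d : ℕ) (a : Fin d → ℝ) (l : ℝ) : Set (Rd d) :=
  {y | ∀ i, a i < y i ∧ y i < a i + l}

/-- Side length of a dyadic cube of generation `k` in the lattice with unit size `l₀`. -/
def dSide (l₀ : ℝ) (k : ℤ) : ℝ := l₀ * 2 ^ k

/-- The dyadic cube, indexed by generation `k : ℤ` and position `m : Fin d → ℤ`,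
of the dyadic lattice `D(Q₀)` generated by the cube `Q₀` with corner `a₀` and
side length `l₀`. -/
def dSet (d : ℕ) (a₀ : Fin d → ℝ) (l₀ : ℝ) (Q : ℤ × (Fin d → ℤ)) : Set (Rd d) :=
  {y | ∀ i, a₀ i + dSide l₀ Q.1 * (Q.2 i : ℝ) ≤ y i ∧
        y i < a₀ i + dSide l₀ Q.1 * ((Q.2 i : ℝ) + 1)}

/-- The dyadic Hausdorff content `H^{β,Q₀}_∞`, via countable covers by dyadic cubes. -/
def dContent (d : ℕ) (β : ℝ) (a₀ : Fin d → ℝ) (l₀ : ℝ) (E : Set (Rd d)) : ℝ≥0∞ :=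
  ⨅ (c : ℕ → ℤ × (Fin d → ℤ)) (_ : E ⊆ ⋃ i, dSet d a₀ l₀ (c i)),
    ∑' i, ENNReal.ofReal (dSide l₀ (c i).1 ^ β)

/-- The dyadic maximal function associated with `H^{β,Q₀}_∞`. -/
def dMax (d : ℕ) (β : ℝ) (a₀ : Fin d → ℝ) (l₀ : ℝ) (f : Rd d → ℝ) (x : Rd d) : ℝ≥0∞ :=
  ⨆ (Q : ℤ × (Fin d → ℤ)) (_ : x ∈ dSet d a₀ l₀ Q),
    choquet d (dContent d β a₀ l₀) (dSet d a₀ l₀ Q) (fun y => |f y|)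
      / ENNReal.ofReal (dSide l₀ Q.1 ^ β)

/-- The dyadic `β`-dimensional sharp maximal function `M^{#}_{β,Q₀}`. -/
def dSharp (d : ℕ) (β : ℝ) (a₀ : Fin d → ℝ) (l₀ : ℝ) (f : Rd d → ℝ) (x : Rd d) : ℝ≥0∞ :=
  ⨆ (Q : ℤ × (Fin d → ℤ)) (_ : x ∈ dSet d a₀ l₀ Q),
    ⨅ (c : ℝ),
      choquet d (dContent d β a₀ l₀) (dSet d a₀ l₀ Q) (fun y => |f y - c|)
        / ENNReal.ofReal (dSide l₀ Q.1 ^ β)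

/-- The `β`-dimensional sharp maximal function `M^{#}_β`, over all axis-parallel cubes. -/
def sharpMax (d : ℕ) (β : ℝ) (f : Rd d → ℝ) (x : Rd d) : ℝ≥0∞ :=
  ⨆ (a : Fin d → ℝ) (l : ℝ) (_ : 0 < l) (_ : x ∈ cubeSet d a l),
    ⨅ (c : ℝ),
      choquet d (hContent d β) (cubeSet d a l) (fun y => |f y - c|) / ENNReal.ofReal (l ^ β)

/-- The `β`-dimensional maximal operator `M_{H^β_∞}` over balls. -/
def ballMax (d : ℕ) (β : ℝ) (f : Rd d → ℝ) (x : Rd d) : ℝ≥0∞ :=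
  ⨆ (r : ℝ) (_ : 0 < r),
    choquet d (hContent d β) (Metric.ball x r) (fun y => |f y|)
      / hContent d β (Metric.ball x r)

/-- The Riesz normalization constant `γ(α)`. -/
def rieszConst (d : ℕ) (α : ℝ) : ℝ :=
  Real.pi ^ ((d : ℝ) / 2) * 2 ^ α * Real.Gamma (α / 2) / Real.Gamma (((d : ℝ) - α) / 2)

/-- The Riesz potential `I_α μ` of a measure. -/
def rieszM (d : ℕ) (α : ℝ) (μ : Measure (Rd d)) (x : Rd d) : ℝ≥0∞ :=
  (ENNReal.ofReal (rieszConst d α))⁻¹ * ∫⁻ y, ENNReal.ofReal (dist x y ^ (α - (d : ℝ))) ∂μ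

/-- The (real-valued) Riesz potential `I_α f` of a function. -/
def rieszR (d : ℕ) (α : ℝ) (f : Rd d → ℝ) (x : Rd d) : ℝ :=
  (rieszConst d α)⁻¹ * ∫ y, f y * dist x y ^ (α - (d : ℝ))

/-- The fractional maximal function `M_α μ` of a measure. -/
def fracMaxM (d : ℕ) (α : ℝ) (μ : Measure (Rd d)) (x : Rd d) : ℝ≥0∞ :=
  ⨆ (a : Fin d → ℝ) (l : ℝ) (_ : 0 < l) (_ : x ∈ cubeSet d a l),
    μ (cubeSet d a l) * ENNReal.ofReal (l ^ (α - (d : ℝ)))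

/-- The fractional maximal function `M_α f` of a function. -/
def fracMaxF (d : ℕ) (α : ℝ) (f : Rd d → ℝ) (x : Rd d) : ℝ≥0∞ :=
  ⨆ (a : Fin d → ℝ) (l : ℝ) (_ : 0 < l) (_ : x ∈ cubeSet d a l),
    (∫⁻ y in cubeSet d a l, ENNReal.ofReal |f y|) * ENNReal.ofReal (l ^ (α - (d : ℝ)))

/-- The weak `L^{p,∞}(H^β_∞)` quasinorm. -/
def weakNorm (d : ℕ) (β : ℝ) (p : ℝ) (g : Rd d → ℝ≥0∞) : ℝ≥0∞ :=
  ⨆ (t : ℝ) (_ : 0 < t),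
    ENNReal.ofReal t * hContent d β {x | ENNReal.ofReal t < g x} ^ (1 / p)

/-- The local Morrey norm `‖μ‖_{M^β(Ω)}`. -/
def morreyNorm (d : ℕ) (β : ℝ) (μ : Measure (Rd d)) (Ω : Set (Rd d)) : ℝ≥0∞ :=
  ⨆ (x : Rd d) (_ : x ∈ Ω) (r : ℝ) (_ : 0 < r),
    μ (Metric.ball x r ∩ Ω) / ENNReal.ofReal (r ^ β)

/-- Generation-`k` cell at position `m` of a dyadic grid with generation offsets `o`. -/
def gcell (d : ℕ) (o : ℤ → Fin d → ℝ) (k : ℤ) (m : Fin d → ℤ) : Set (Rd d) :=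
  {y | ∀ i, o k i + 2 ^ k * (m i : ℝ) ≤ y i ∧ y i < o k i + 2 ^ k * ((m i : ℝ) + 1)}

/-- A dyadic grid in `ℝ^d`: each generation `k` consists of half-open cubes of side `2^k`
partitioning `ℝ^d`, and consecutive generations are nested. -/
structure DyadicGrid (d : ℕ) where
  o : ℤ → Fin d → ℝ
  nested : ∀ k m, ∃ m', gcell d o k m ⊆ gcell d o (k + 1) m'

/-- The dyadic Riesz potential `I^D_α μ` with respect to a dyadic grid. -/
def dyadicRiesz (d : ℕ) (G : DyadicGrid d) (α : ℝ) (μ : Measure (Rd d)) (x : Rd d) : ℝ≥0∞ :=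
  ∑' p : ℤ × (Fin d → ℤ),
    Set.indicator (gcell d G.o p.1 p.2)
      (fun _ => μ (gcell d G.o p.1 p.2) * ENNReal.ofReal (((2 : ℝ) ^ p.1) ^ (α - (d : ℝ)))) x

/-- The exponential on `ℝ≥0∞`. -/
def expE (t : ℝ≥0∞) : ℝ≥0∞ := if t = ∞ then ∞ else ENNReal.ofReal (Real.exp t.toReal)

/-!
Fix `x ∈ Q`. Since `f` lives in `2Q`, only distances `|x - y| < D ≍ ℓ(Q)` occur, and splitting
them dyadically bounds `|I_α f(x)|` by `∑ₖ (D 2^{-k})^{α-d} ∫_{B(x, D 2^{-k})} |f|`.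
The Choquet integral is only countably quasi-subadditive, so the `k`-th piece is given the
weight `θₖ = (1 - q) qᵏ` and `{|I_α f| > t}` is covered by the level sets
`{piece k > θₖ t}`. For a single scale `r` two bounds on the content of these level sets
are available: the content `≲ ℓ(Q)^β` of `Q`, and a weak-type bound `≲ r^β (r^{α-d} ‖f‖₁) / t`
obtained by covering the level set with the `3r`-balls around a maximal `2r`-separated subset.
Interpolating the two with an exponent `lam ∈ ((d - α) / β, 1)` and integrating in `t` bounds
the `k`-th piece by `ℓ(Q)^{β(1-lam)} (D 2^{-k})^{β lam + α - d} ‖f‖₁`, whose exponent is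
positive precisely because `β > d - α`; summing the geometric series gives
`ℓ(Q)^{β + α - d} ‖f‖₁ ≲ ℓ(Q)^β M_α f(x₀)`.
-/

lemma min_le_rpow_mul_rpow {a b lam : ℝ} (ha : 0 ≤ a) (hb : 0 ≤ b) (hlam0 : 0 ≤ lam)
    (hlam1 : lam ≤ 1) : min a b ≤ a ^ (1 - lam) * b ^ lam :=
  calc min a b = min a b ^ (1 - lam) * min a b ^ lam := by
        rw [← Real.rpow_add' (le_min ha hb) (by norm_num)]; simp
    _ ≤ a ^ (1 - lam) * b ^ lam :=
        mul_le_mul (Real.rpow_le_rpow (le_min ha hb) (min_le_left a b) (by linarith))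
          (Real.rpow_le_rpow (le_min ha hb) (min_le_right a b) hlam0) (by positivity)
          (by positivity)

lemma lintegral_Ioc_mul_rpow_neg {a T lam : ℝ} (ha : 0 ≤ a) (hT : 0 ≤ T) (hlam : lam < 1) :
    ∫⁻ s in Ioc 0 T, ENNReal.ofReal (a * s ^ (-lam)) =
      ENNReal.ofReal (a * T ^ (1 - lam) / (1 - lam)) := by
  have hint : IntegrableOn (fun s : ℝ => a * s ^ (-lam)) (Ioc 0 T) := by
    refine Integrable.const_mul ?_ a
    have := intervalIntegral.intervalIntegrable_rpow' (a := 0) (b := T) (r := -lam) (by linarith)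
    rwa [intervalIntegrable_iff, uIoc_of_le hT] at this
  rw [← ofReal_integral_eq_lintegral_ofReal hint
    (ae_restrict_of_forall_mem measurableSet_Ioc fun s hs => by have := hs.1; positivity),
    integral_const_mul, ← intervalIntegral.integral_of_le hT,
    integral_rpow (Or.inl (by linarith)), Real.zero_rpow (by linarith), neg_add_eq_sub,
    sub_zero, mul_div_assoc]

lemma exists_dyadic_annulus {s D : ℝ} (hs : 0 < s) (hsD : s < D) :
    ∃ k : ℕ, D / 2 ^ (k + 1) ≤ s ∧ s < D / 2 ^ k := by
  have hex : ∃ k : ℕ, D / 2 ^ (k + 1) ≤ s := by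
    obtain ⟨n, hn⟩ := exists_nat_gt (D / s)
    refine ⟨n, (div_le_iff₀ (by positivity)).2 ?_⟩
    have hn2 : (n : ℝ) < 2 ^ (n + 1) := by
      exact_mod_cast n.lt_two_pow_self.trans (Nat.pow_lt_pow_right one_lt_two n.lt_succ_self)
    have := (div_lt_iff₀ hs).1 (hn.trans hn2)
    linarith
  classical
  obtain ⟨k, hk, hmin⟩ : ∃ k : ℕ, D / 2 ^ (k + 1) ≤ s ∧ ∀ j < k, ¬ D / 2 ^ (j + 1) ≤ s :=
    ⟨Nat.find hex, Nat.find_spec hex, fun j => Nat.find_min hex⟩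
  refine ⟨k, hk, ?_⟩
  cases k with
  | zero => simpa using hsD
  | succ j => exact not_le.1 (hmin j j.lt_succ_self)

lemma tsum_ofReal_mul_pow {X q : ℝ} (hX : 0 ≤ X) (hq0 : 0 ≤ q) (hq1 : q < 1) :
    ∑' k : ℕ, ENNReal.ofReal (X * q ^ k) = ENNReal.ofReal (X / (1 - q)) := by
  rw [← ENNReal.ofReal_tsum_of_nonneg (fun k => by positivity)
    ((summable_geometric_of_lt_one hq0 hq1).mul_left X), tsum_mul_left,
    tsum_geometric_of_lt_one hq0 hq1, div_eq_mul_inv]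

lemma mul_div_two_pow_rpow_mul {c D b p : ℝ} (hc : 0 ≤ c) (hD : 0 < D) (k : ℕ) :
    (c * (D / 2 ^ k)) ^ b * (D / 2 ^ (k + 1)) ^ p =
      c ^ b * 2 ^ (-p) * D ^ (b + p) * (((2 : ℝ) ^ (-(b + p) / 2)) ^ k) ^ 2 := by
  have ht : (0 : ℝ) < 2 ^ k := by positivity
  have hq : (((2 : ℝ) ^ (-(b + p) / 2)) ^ k) ^ 2 =
      (((2 : ℝ) ^ k) ^ b)⁻¹ * (((2 : ℝ) ^ k) ^ p)⁻¹ := by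
    rw [← pow_mul, mul_comm, pow_mul, ← Real.rpow_natCast _ 2, ← Real.rpow_mul (by norm_num),
      Real.rpow_pow_comm (by norm_num), ← Real.rpow_neg_one, ← Real.rpow_neg_one,
      ← Real.rpow_mul ht.le, ← Real.rpow_mul ht.le, ← Real.rpow_add ht]
    congr 1
    push_cast
    ring
  rw [hq, pow_succ, Real.mul_rpow hc (by positivity), Real.div_rpow hD.le ht.le,
    Real.div_rpow hD.le (by positivity), Real.mul_rpow ht.le (by norm_num), Real.rpow_add hD,
    Real.rpow_neg (by norm_num)]
  field_simp

lemma EuclideanSpace.dist_le_sqrt_card_mul {ι : Type*} [Fintype ι] {x y : EuclideanSpace ℝ ι}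
    {c : ℝ} (hc : 0 ≤ c) (h : ∀ i, |x i - y i| ≤ c) :
    dist x y ≤ √(Fintype.card ι) * c := by
  rw [EuclideanSpace.dist_eq]
  calc √(∑ i, dist (x i) (y i) ^ 2) ≤ √(∑ _i : ι, c ^ 2) :=
        Real.sqrt_le_sqrt <| Finset.sum_le_sum fun i _ =>
          pow_le_pow_left₀ dist_nonneg ((Real.dist_eq _ _).trans_le (h i)) 2
    _ = √(Fintype.card ι) * c := by
        rw [Finset.sum_const, nsmul_eq_mul, Real.sqrt_mul (by positivity), Real.sqrt_sq hc,
          Finset.card_univ]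

open Finset in
lemma Metric.packingNumber_le_of_forall_finset_card_le {X : Type*} [PseudoEMetricSpace X]
    {ε : ℝ≥0} {A : Set X} {N : ℕ}
    (h : ∀ S : Finset X, ↑S ⊆ A → Metric.IsSeparated ε (S : Set X) → #S ≤ N) :
    Metric.packingNumber ε A ≤ N := by
  refine iSup₂_le fun C hCA => iSup_le fun hC => ?_
  by_contra! hlt
  obtain ⟨t, htC, ht⟩ := exists_subset_encard_eq (Order.add_one_le_of_lt hlt)
  have htfin : t.Finite := finite_of_encard_eq_coe (k := N + 1) (by simpa using ht)
  have hcard := h htfin.toFinset (by simpa using htC.trans hCA) (by simpa using hC.subset htC)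
  rw [htfin.encard_eq_coe_toFinset_card] at ht
  norm_cast at ht
  omega

section MetricMeasureSpace

variable {X : Type*} [PseudoMetricSpace X] [MeasurableSpace X] [OpensMeasurableSpace X]
  {μ : Measure X}

open Finset in
lemma card_mul_le_lintegral_of_isSeparated {g : X → ℝ≥0∞} {r : ℝ}
    (hr : 0 ≤ r) {τ : ℝ≥0∞} {S : Finset X}
    (hS : Metric.IsSeparated (ENNReal.ofReal (2 * r)) (S : Set X))
    (hτ : ∀ p ∈ S, τ < ∫⁻ y in Metric.ball p r, g y ∂μ) :
    #S * τ ≤ ∫⁻ y, g y ∂μ := by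
  have hdisj : (S : Set X).PairwiseDisjoint fun p => Metric.ball p r := by
    intro p hp q hq hpq
    refine Metric.ball_disjoint_ball ?_
    have : ENNReal.ofReal (2 * r) < edist p q := hS hp hq hpq
    rw [edist_dist, ENNReal.ofReal_lt_ofReal_iff_of_nonneg (by positivity)] at this
    linarith
  calc (#S : ℝ≥0∞) * τ = ∑ p ∈ S, τ := by rw [sum_const, nsmul_eq_mul]
    _ ≤ ∑ p ∈ S, ∫⁻ y in Metric.ball p r, g y ∂μ := sum_le_sum fun p hp => (hτ p hp).le
    _ = ∫⁻ y in ⋃ p ∈ S, Metric.ball p r, g y ∂μ :=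
        (lintegral_biUnion_finset hdisj (fun _ _ => measurableSet_ball) g).symm
    _ ≤ ∫⁻ y, g y ∂μ := setLIntegral_le_lintegral _ _

lemma lintegral_mul_rpow_dist_le_tsum {g : X → ℝ≥0∞} (hg : Measurable g) {x : X}
    {D p : ℝ} (hp : p < 0) (hD : ∀ y, g y ≠ 0 → dist x y < D) :
    ∫⁻ y, g y * ENNReal.ofReal (dist x y ^ p) ∂μ ≤
      ∑' k : ℕ, ENNReal.ofReal ((D / 2 ^ (k + 1)) ^ p) *
        ∫⁻ y in Metric.ball x (D / 2 ^ k), g y ∂μ := by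
  have hpt : ∀ y, g y * ENNReal.ofReal (dist x y ^ p) ≤ ∑' k : ℕ,
      (Metric.ball x (D / 2 ^ k)).indicator
        (fun y => ENNReal.ofReal ((D / 2 ^ (k + 1)) ^ p) * g y) y := by
    intro y
    rcases eq_or_ne (g y) 0 with hy | hy
    · simp [hy]
    rcases (dist_nonneg (x := x) (y := y)).eq_or_lt with hxy | hxy
    · simp [← hxy, Real.zero_rpow hp.ne]
    obtain ⟨k, hk, hk'⟩ := exists_dyadic_annulus hxy (hD y hy)
    refine le_trans ?_ (ENNReal.le_tsum k)
    rw [indicator_of_mem (Metric.mem_ball'.2 hk'), mul_comm]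
    exact mul_le_mul_left (ENNReal.ofReal_le_ofReal <|
      Real.rpow_le_rpow_of_nonpos (div_pos (hxy.trans (hD y hy)) (by positivity)) hk hp.le) _
  calc ∫⁻ y, g y * ENNReal.ofReal (dist x y ^ p) ∂μ
      ≤ ∫⁻ y, ∑' k : ℕ, (Metric.ball x (D / 2 ^ k)).indicator
          (fun y => ENNReal.ofReal ((D / 2 ^ (k + 1)) ^ p) * g y) y ∂μ := lintegral_mono hpt
    _ = _ := by
        rw [lintegral_tsum fun k => ((hg.const_mul _).indicator measurableSet_ball).aemeasurable]
        simp_rw [lintegral_indicator measurableSet_ball, lintegral_const_mul _ hg]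

end MetricMeasureSpace

section HausdorffContent

variable {d : ℕ} {β : ℝ}

lemma omegaConst_pos (hβ : 0 < β) : 0 < omegaConst β := by
  unfold omegaConst
  have := Real.Gamma_pos_of_pos (show 0 < β / 2 + 1 by linarith)
  positivity

lemma hContent_mono {E F : Set (Rd d)} (h : E ⊆ F) : hContent d β E ≤ hContent d β F :=
  le_iInf₂ fun c hc => iInf₂_le c (h.trans hc)

lemma hContent_le_of_subset_ball (hβ : β ≠ 0) {E : Set (Rd d)} {x : Rd d} {r : ℝ}
    (h : E ⊆ Metric.ball x r) : hContent d β E ≤ ENNReal.ofReal (omegaConst β * r ^ β) := by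
  refine (iInf₂_le (fun n => if n = 0 then (x, r) else (x, 0)) ?_).trans_eq ?_
  · exact h.trans (subset_iUnion_of_subset 0 (by simp))
  · rw [tsum_eq_single 0 fun n hn => by simp [hn, Real.zero_rpow hβ]]
    simp

lemma hContent_iUnion_le (E : ℕ → Set (Rd d)) :
    hContent d β (⋃ n, E n) ≤ ∑' n, hContent d β (E n) := by
  refine ENNReal.le_of_forall_pos_le_add fun ε hε hfin => ?_
  obtain ⟨ε', hε', hε'ε⟩ := ENNReal.exists_pos_sum_of_countable (ENNReal.coe_pos.2 hε).ne' ℕ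
  have hcover : ∀ n, ∃ c : ℕ → Rd d × ℝ, E n ⊆ ⋃ i, Metric.ball (c i).1 (c i).2 ∧
      ∑' i, ENNReal.ofReal (omegaConst β * (c i).2 ^ β) < hContent d β (E n) + ε' n := by
    intro n
    have hlt : hContent d β (E n) < hContent d β (E n) + ε' n :=
      ENNReal.lt_add_right (ne_top_of_le_ne_top hfin.ne (ENNReal.le_tsum n))
        (ENNReal.coe_ne_zero.2 (hε' n).ne')
    simpa only [hContent, iInf_lt_iff, exists_prop] using hlt
  choose c hc hcost using hcover
  let c' : ℕ → Rd d × ℝ := fun m => c (Nat.unpair m).1 (Nat.unpair m).2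
  have hc' : ⋃ n, E n ⊆ ⋃ m, Metric.ball (c' m).1 (c' m).2 := by
    refine iUnion_subset fun n x hx => ?_
    obtain ⟨i, hi⟩ := mem_iUnion.1 (hc n hx)
    exact mem_iUnion.2 ⟨Nat.pair n i, by simpa [c'] using hi⟩
  calc hContent d β (⋃ n, E n)
      ≤ ∑' m, ENNReal.ofReal (omegaConst β * (c' m).2 ^ β) := iInf₂_le c' hc'
    _ = ∑' p : ℕ × ℕ, ENNReal.ofReal (omegaConst β * (c p.1 p.2).2 ^ β) :=
        Nat.pairEquiv.symm.tsum_eq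
          (fun p : ℕ × ℕ => ENNReal.ofReal (omegaConst β * (c p.1 p.2).2 ^ β))
    _ = ∑' n, ∑' i, ENNReal.ofReal (omegaConst β * (c n i).2 ^ β) :=
        ENNReal.tsum_prod (f := fun n i => ENNReal.ofReal (omegaConst β * (c n i).2 ^ β))
    _ ≤ ∑' n, (hContent d β (E n) + ε' n) := ENNReal.tsum_le_tsum fun n => (hcost n).le
    _ ≤ ∑' n, hContent d β (E n) + ε := by
        rw [ENNReal.tsum_add]
        exact add_le_add_right hε'ε.le _

variable (d) in
def hContentOuter (hβ : β ≠ 0) : OuterMeasure (Rd d) where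
  measureOf := hContent d β
  empty := le_antisymm
    ((hContent_le_of_subset_ball hβ (empty_subset (Metric.ball 0 0))).trans_eq
      (by simp [Real.zero_rpow hβ]))
    zero_le
  mono := hContent_mono
  iUnion_nat E _ := hContent_iUnion_le E

lemma coe_hContentOuter (hβ : β ≠ 0) : ⇑(hContentOuter d hβ) = hContent d β := rfl

open Finset in
/-- A maximal `2 r`-separated subset of `E` has at most `(∫ g) / τ` points, because the
`r`-balls around its points are disjoint, and the `3 r`-balls around them cover `E`. -/
lemma hContent_le_of_lt_setLIntegral_ball (hβ : 0 < β) {g : Rd d → ℝ≥0∞}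
    {E : Set (Rd d)} {r : ℝ} (hr : 0 < r) {τ : ℝ≥0∞} (hτ : τ ≠ 0) (hτ' : τ ≠ ∞)
    (hE : ∀ x ∈ E, τ < ∫⁻ y in Metric.ball x r, g y) :
    hContent d β E ≤ (∫⁻ y, g y) / τ * ENNReal.ofReal (omegaConst β * (3 * r) ^ β) := by
  have hcost : ENNReal.ofReal (omegaConst β * (3 * r) ^ β) ≠ 0 := by
    have := omegaConst_pos hβ
    have : 0 < (3 * r) ^ β := by positivity
    positivity
  rcases eq_or_ne ((∫⁻ y, g y) / τ) ∞ with htop | hfin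
  · simp [htop, ENNReal.top_mul hcost]
  let ε : ℝ≥0 := (2 * r).toNNReal
  have hε : (ε : ℝ) = 2 * r := Real.coe_toNNReal _ (by positivity)
  have hcard : ∀ S : Finset (Rd d), ↑S ⊆ E → Metric.IsSeparated ε (S : Set (Rd d)) →
      (#S : ℝ≥0∞) ≤ (∫⁻ y, g y) / τ := fun S hSE hS =>
    (ENNReal.le_div_iff_mul_le (Or.inl hτ) (Or.inl hτ')).2 <|
      card_mul_le_lintegral_of_isSeparated hr.le hS fun p hp => hE p (hSE hp)
  have hpack : Metric.packingNumber ε E ≠ ⊤ :=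
    ne_top_of_le_ne_top (ENat.natCast_ne_top ⌊((∫⁻ y, g y) / τ).toReal⌋₊) <|
      Metric.packingNumber_le_of_forall_finset_card_le fun S hSE hS =>
        Nat.le_floor <| by simpa using ENNReal.toReal_mono hfin (hcard S hSE hS)
  set C := Metric.maximalSeparatedSet ε E
  have hCfin : C.Finite := by
    refine encard_ne_top_iff.1 ?_
    rwa [Metric.encard_maximalSeparatedSet hpack]
  have hcover : E ⊆ ⋃ p ∈ hCfin.toFinset, Metric.ball p (3 * r) := by
    refine (Metric.isCover_iff_subset_iUnion_closedBall.1
      (Metric.isCover_maximalSeparatedSet hpack)).trans ?_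
    simp only [Set.Finite.mem_toFinset]
    exact iUnion₂_mono fun p _ => Metric.closedBall_subset_ball (by rw [hε]; linarith)
  calc hContent d β E
      ≤ ∑ p ∈ hCfin.toFinset, hContent d β (Metric.ball p (3 * r)) := by
        rw [← coe_hContentOuter hβ.ne']
        exact (measure_mono hcover).trans (measure_biUnion_finset_le _ _)
    _ ≤ ∑ p ∈ hCfin.toFinset, ENNReal.ofReal (omegaConst β * (3 * r) ^ β) :=
        sum_le_sum fun p _ => hContent_le_of_subset_ball hβ.ne' subset_rfl
    _ = #hCfin.toFinset * ENNReal.ofReal (omegaConst β * (3 * r) ^ β) := by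
        rw [sum_const, nsmul_eq_mul]
    _ ≤ (∫⁻ y, g y) / τ * ENNReal.ofReal (omegaConst β * (3 * r) ^ β) := by
        gcongr
        exact hcard _ (by simpa using Metric.maximalSeparatedSet_subset)
          (by simpa using Metric.isSeparated_maximalSeparatedSet)

end HausdorffContent

section Choquet

variable {d : ℕ} (μ : OuterMeasure (Rd d)) {Ω : Set (Rd d)}

lemma choquet_le_tsum_choquetE {g : Rd d → ℝ} {h : ℕ → Rd d → ℝ≥0∞} {θ : ℕ → ℝ≥0∞}
    (hθ : ∑' k, θ k ≤ 1) (hgh : ∀ x ∈ Ω, ENNReal.ofReal (g x) ≤ ∑' k, θ k * h k x) :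
    choquet d μ Ω g ≤ ∑' k, choquetE d μ Ω (h k) := by
  have hlevel : ∀ t : ℝ, 0 < t →
      {x | x ∈ Ω ∧ t < g x} ⊆ ⋃ k, {x | x ∈ Ω ∧ ENNReal.ofReal t < h k x} := by
    rintro t ht x ⟨hx, htx⟩
    by_contra hnot
    simp only [mem_iUnion, not_exists] at hnot
    have : ENNReal.ofReal (g x) ≤ ENNReal.ofReal t :=
      calc ENNReal.ofReal (g x) ≤ ∑' k, θ k * h k x := hgh x hx
        _ ≤ ∑' k, θ k * ENNReal.ofReal t := by
            gcongr with k
            exact not_lt.1 fun hlt => hnot k ⟨hx, hlt⟩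
        _ = (∑' k, θ k) * ENNReal.ofReal t := ENNReal.tsum_mul_right
        _ ≤ ENNReal.ofReal t := mul_le_of_le_one_left' hθ
    exact ((ENNReal.ofReal_lt_ofReal_iff_of_nonneg ht.le).2 htx).not_ge this
  have hanti : ∀ k, Antitone fun t : ℝ => μ {x | x ∈ Ω ∧ ENNReal.ofReal t < h k x} :=
    fun k t t' htt' => measure_mono <| ofPred_subset_ofPred.2 fun x hx =>
      ⟨hx.1, (ENNReal.ofReal_le_ofReal htt').trans_lt hx.2⟩
  calc choquet d μ Ω g
      ≤ ∫⁻ t in Ioi 0, ∑' k, μ {x | x ∈ Ω ∧ ENNReal.ofReal t < h k x} :=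
        setLIntegral_mono' measurableSet_Ioi fun t ht =>
          (measure_mono (hlevel t ht)).trans (measure_iUnion_le _)
    _ = ∑' k, choquetE d μ Ω (h k) :=
        lintegral_tsum fun k => (hanti k).measurable.aemeasurable

/-- The level sets have measure at most `min K (c T / s) ≤ K ^ (1 - lam) * (c T / s) ^ lam`,
which is integrable at `s = 0` since `lam < 1`, and they are empty for `s > T`. -/
lemma choquetE_le_of_weakType {h : Rd d → ℝ≥0∞} {K c T lam : ℝ} (hK : 0 ≤ K) (hc : 0 ≤ c)
    (hT : 0 ≤ T) (hlam0 : 0 ≤ lam) (hlam1 : lam < 1) (hΩ : μ Ω ≤ ENNReal.ofReal K)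
    (hweak : ∀ s, 0 < s → μ {x | x ∈ Ω ∧ ENNReal.ofReal s < h x} ≤ ENNReal.ofReal (c * T / s))
    (hbdd : ∀ x ∈ Ω, h x ≤ ENNReal.ofReal T) :
    choquetE d μ Ω h ≤ ENNReal.ofReal (K ^ (1 - lam) * c ^ lam * T / (1 - lam)) := by
  have hlevel : ∀ s ∈ Ioi (0 : ℝ), μ {x | x ∈ Ω ∧ ENNReal.ofReal s < h x} ≤ (Ioc 0 T).indicator
      (fun s => ENNReal.ofReal (K ^ (1 - lam) * (c * T) ^ lam * s ^ (-lam))) s := by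
    intro s hs
    by_cases hsT : s ≤ T
    · rw [indicator_of_mem (show s ∈ Ioc 0 T from ⟨hs, hsT⟩)]
      calc μ {x | x ∈ Ω ∧ ENNReal.ofReal s < h x}
          ≤ ENNReal.ofReal (min K (c * T / s)) := by
            rw [ENNReal.ofReal_min]
            exact le_min ((measure_mono fun x hx => hx.1).trans hΩ) (hweak s hs)
        _ ≤ ENNReal.ofReal (K ^ (1 - lam) * (c * T / s) ^ lam) :=
            ENNReal.ofReal_le_ofReal <| min_le_rpow_mul_rpow hK
              (div_nonneg (mul_nonneg hc hT) (le_of_lt hs)) hlam0 hlam1.le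
        _ = ENNReal.ofReal (K ^ (1 - lam) * (c * T) ^ lam * s ^ (-lam)) := by
            rw [Real.div_rpow (mul_nonneg hc hT) (le_of_lt hs), Real.rpow_neg (le_of_lt hs),
              div_eq_mul_inv, mul_assoc]
    · rw [indicator_of_notMem fun h => hsT h.2]
      have hempty : {x | x ∈ Ω ∧ ENNReal.ofReal s < h x} = ∅ :=
        eq_empty_of_forall_notMem fun x hx => hsT <|
          (ENNReal.ofReal_le_ofReal_iff hT).1 (hx.2.trans_le (hbdd x hx.1)).le
      rw [hempty, measure_empty]
  calc choquetE d μ Ω h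
      ≤ ∫⁻ s in Ioi 0, (Ioc 0 T).indicator
          (fun s => ENNReal.ofReal (K ^ (1 - lam) * (c * T) ^ lam * s ^ (-lam))) s :=
        setLIntegral_mono' measurableSet_Ioi hlevel
    _ ≤ ∫⁻ s in Ioc 0 T, ENNReal.ofReal (K ^ (1 - lam) * (c * T) ^ lam * s ^ (-lam)) :=
        (setLIntegral_le_lintegral _ _).trans_eq (lintegral_indicator measurableSet_Ioc _)
    _ = ENNReal.ofReal (K ^ (1 - lam) * c ^ lam * T / (1 - lam)) := by
        have hTT : T ^ lam * T ^ (1 - lam) = T := by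
          rw [← Real.rpow_add' hT (by simp), add_sub_cancel, Real.rpow_one]
        rw [lintegral_Ioc_mul_rpow_neg (by positivity) hT hlam1, Real.mul_rpow hc hT]
        congr 1
        linear_combination K ^ (1 - lam) * c ^ lam / (1 - lam) * hTT

end Choquet

lemma choquetE_lintegral_ball_le {d : ℕ} {β lam a r R : ℝ} (hβ : 0 < β) (hlam0 : 0 ≤ lam)
    (hlam1 : lam < 1) (ha : 0 < a) (hr : 0 < r) (hR : 0 < R) {z : Rd d} {Ω : Set (Rd d)}
    (hΩ : Ω ⊆ Metric.ball z R) (g : Rd d → ℝ≥0∞) :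
    choquetE d (hContent d β) Ω (fun x => ENNReal.ofReal a * ∫⁻ y in Metric.ball x r, g y) ≤
      ENNReal.ofReal (omegaConst β * R ^ (β * (1 - lam)) * (3 * r) ^ (β * lam) * a / (1 - lam)) *
        ∫⁻ y, g y := by
  have hω := omegaConst_pos hβ
  have hlam : 0 < 1 - lam := by linarith
  rcases eq_or_ne (∫⁻ y, g y) ∞ with hG | hG
  · rw [hG, ENNReal.mul_top (by positivity)]
    exact le_top
  set G := (∫⁻ y, g y).toReal
  have hGG : ∫⁻ y, g y = ENNReal.ofReal G := (ENNReal.ofReal_toReal hG).symm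
  have hweak : ∀ s, 0 < s → hContent d β
      {x | x ∈ Ω ∧ ENNReal.ofReal s < ENNReal.ofReal a * ∫⁻ y in Metric.ball x r, g y} ≤
        ENNReal.ofReal (omegaConst β * (3 * r) ^ β * (a * G) / s) := by
    intro s hs
    have hlevel : ∀ x ∈ {x | x ∈ Ω ∧
        ENNReal.ofReal s < ENNReal.ofReal a * ∫⁻ y in Metric.ball x r, g y},
        ENNReal.ofReal (s / a) < ∫⁻ y in Metric.ball x r, g y := by
      intro x hx
      rw [ENNReal.ofReal_div_of_pos ha, ENNReal.div_lt_iff (by simp [ha]) (by simp), mul_comm]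
      exact hx.2
    refine (hContent_le_of_lt_setLIntegral_ball hβ hr (by simp [hs, ha]) ENNReal.ofReal_ne_top
      hlevel).trans_eq ?_
    rw [hGG, ← ENNReal.ofReal_div_of_pos (by positivity), ← ENNReal.ofReal_mul (by positivity)]
    congr 1
    field_simp
  have hcoef : (omegaConst β * R ^ β) ^ (1 - lam) * (omegaConst β * (3 * r) ^ β) ^ lam =
      omegaConst β * R ^ (β * (1 - lam)) * (3 * r) ^ (β * lam) := by
    rw [Real.mul_rpow hω.le (by positivity), Real.mul_rpow hω.le (by positivity),
      ← Real.rpow_mul hR.le, ← Real.rpow_mul (by positivity)]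
    have : omegaConst β ^ (1 - lam) * omegaConst β ^ lam = omegaConst β := by
      rw [← Real.rpow_add hω, sub_add_cancel, Real.rpow_one]
    linear_combination R ^ (β * (1 - lam)) * (3 * r) ^ (β * lam) * this
  calc choquetE d (hContent d β) Ω (fun x => ENNReal.ofReal a * ∫⁻ y in Metric.ball x r, g y)
      ≤ ENNReal.ofReal ((omegaConst β * R ^ β) ^ (1 - lam) *
          (omegaConst β * (3 * r) ^ β) ^ lam * (a * G) / (1 - lam)) := by
        rw [← coe_hContentOuter hβ.ne']
        refine choquetE_le_of_weakType _ (by positivity) (by positivity) (by positivity) hlam0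
          hlam1 (hContent_le_of_subset_ball hβ.ne' hΩ) hweak fun x _ => ?_
        rw [ENNReal.ofReal_mul ha.le, ← hGG]
        exact mul_le_mul_right (setLIntegral_le_lintegral _ _) _
    _ = ENNReal.ofReal (omegaConst β * R ^ (β * (1 - lam)) * (3 * r) ^ (β * lam) * a /
          (1 - lam)) * ∫⁻ y, g y := by
        rw [hcoef, hGG, ← ENNReal.ofReal_mul (by positivity)]
        congr 1
        ring

lemma rieszConst_pos {d : ℕ} {α : ℝ} (hα : 0 < α) (hαd : α < d) : 0 < rieszConst d α := by
  unfold rieszConst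
  have := Real.Gamma_pos_of_pos (show 0 < α / 2 by linarith)
  have := Real.Gamma_pos_of_pos (show 0 < ((d : ℝ) - α) / 2 by linarith)
  positivity

lemma enorm_rieszR_le (d : ℕ) (α : ℝ) (f : Rd d → ℝ) (x : Rd d) :
    ‖rieszR d α f x‖ₑ ≤
      ‖(rieszConst d α)⁻¹‖ₑ * ∫⁻ y, ‖f y‖ₑ * ENNReal.ofReal (dist x y ^ (α - d)) := by
  rw [rieszR, enorm_mul]
  gcongr
  refine (enorm_integral_le_lintegral_enorm _).trans_eq (lintegral_congr fun y => ?_)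
  rw [enorm_mul, Real.enorm_of_nonneg (Real.rpow_nonneg dist_nonneg _)]

lemma enorm_rieszR_le_tsum {d : ℕ} {α D : ℝ} (hαd : α < d) {f : Rd d → ℝ} (hf : Measurable f)
    {x : Rd d} (hD : ∀ y, f y ≠ 0 → dist x y < D) :
    ‖rieszR d α f x‖ₑ ≤ ∑' k : ℕ, ‖(rieszConst d α)⁻¹‖ₑ *
      ENNReal.ofReal ((D / 2 ^ (k + 1)) ^ (α - d)) * ∫⁻ y in Metric.ball x (D / 2 ^ k), ‖f y‖ₑ := by
  refine (enorm_rieszR_le d α f x).trans ?_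
  simp_rw [mul_assoc, ENNReal.tsum_mul_left]
  exact mul_le_mul_right (lintegral_mul_rpow_dist_le_tsum (p := α - d) hf.enorm (by linarith)
    fun y hy => hD y (enorm_ne_zero.1 hy)) _

lemma choquet_abs_rieszR_le_tsum {d : ℕ} {α β lam D : ℝ} (hα : 0 < α) (hαd : α < d)
    (hβ : 0 < β) (hlam0 : 0 ≤ lam) (hlam1 : lam < 1) {θ : ℕ → ℝ} (hθ : ∀ k, 0 < θ k)
    (hθsum : ∑' k, ENNReal.ofReal (θ k) ≤ 1) (hD : 0 < D) {z : Rd d} {Ω : Set (Rd d)}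
    {f : Rd d → ℝ} (hf : Measurable f) (hΩ : Ω ⊆ Metric.ball z D)
    (hfD : ∀ x ∈ Ω, ∀ y, f y ≠ 0 → dist x y < D) :
    choquet d (hContent d β) Ω (fun x => |rieszR d α f x|) ≤
      ∑' k : ℕ, ENNReal.ofReal (omegaConst β * 3 ^ (β * lam) * 2 ^ (-(α - d)) *
        (rieszConst d α)⁻¹ / (1 - lam) * D ^ (β + α - d) *
          (((2 : ℝ) ^ (-(β * lam + (α - d)) / 2)) ^ k) ^ 2 / θ k) * ∫⁻ y, ‖f y‖ₑ := by
  have hγ := rieszConst_pos hα hαd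
  have hlam : 0 < 1 - lam := by linarith
  set a : ℕ → ℝ := fun k => (rieszConst d α)⁻¹ * (D / 2 ^ (k + 1)) ^ (α - d) / θ k
  have hdecomp : ∀ x ∈ Ω, ENNReal.ofReal |rieszR d α f x| ≤ ∑' k, ENNReal.ofReal (θ k) *
      (ENNReal.ofReal (a k) * ∫⁻ y in Metric.ball x (D / 2 ^ k), ‖f y‖ₑ) := by
    intro x hx
    rw [← Real.enorm_eq_ofReal_abs]
    refine (enorm_rieszR_le_tsum hαd hf (hfD x hx)).trans_eq (tsum_congr fun k => ?_)
    rw [Real.enorm_of_nonneg (by positivity), ← mul_assoc, ← ENNReal.ofReal_mul (by positivity),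
      ← ENNReal.ofReal_mul (by have := hθ k; positivity)]
    congr 2
    simp only [a]
    field_simp [(hθ k).ne']
  calc choquet d (hContent d β) Ω (fun x => |rieszR d α f x|)
      ≤ ∑' k, choquetE d (hContent d β) Ω
          (fun x => ENNReal.ofReal (a k) * ∫⁻ y in Metric.ball x (D / 2 ^ k), ‖f y‖ₑ) := by
        rw [← coe_hContentOuter hβ.ne']
        exact choquet_le_tsum_choquetE _ hθsum hdecomp
    _ ≤ ∑' k, ENNReal.ofReal (omegaConst β * D ^ (β * (1 - lam)) *
          (3 * (D / 2 ^ k)) ^ (β * lam) * a k / (1 - lam)) * ∫⁻ y, ‖f y‖ₑ :=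
        ENNReal.tsum_le_tsum fun k => choquetE_lintegral_ball_le hβ hlam0 hlam1
          (by have := hθ k; positivity) (by positivity) hD hΩ _
    _ = _ := by
        congr 1 with k
        congr 2
        have hD' : D ^ (β * (1 - lam)) * D ^ (β * lam + (α - d)) = D ^ (β + α - d) := by
          rw [← Real.rpow_add hD]; ring_nf
        calc omegaConst β * D ^ (β * (1 - lam)) * (3 * (D / 2 ^ k)) ^ (β * lam) * a k / (1 - lam)
            = omegaConst β * (rieszConst d α)⁻¹ / (1 - lam) / θ k * D ^ (β * (1 - lam)) *
                ((3 * (D / 2 ^ k)) ^ (β * lam) * (D / 2 ^ (k + 1)) ^ (α - d)) := by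
              simp only [a]; ring
          _ = _ := by
              rw [mul_div_two_pow_rpow_mul (by norm_num) hD k, ← hD']
              ring

theorem exists_choquet_abs_rieszR_le {d : ℕ} {α β : ℝ} (hα : 0 < α) (hαd : α < d)
    (hβ : d - α < β) :
    ∃ C : ℝ, 0 < C ∧ ∀ D : ℝ, 0 < D → ∀ (z : Rd d) (Ω : Set (Rd d)) (f : Rd d → ℝ),
      Measurable f → Ω ⊆ Metric.ball z D → (∀ x ∈ Ω, ∀ y, f y ≠ 0 → dist x y < D) →
      choquet d (hContent d β) Ω (fun x => |rieszR d α f x|) ≤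
        ENNReal.ofReal (C * D ^ (β + α - d)) * ∫⁻ y, ‖f y‖ₑ := by
  have hβ0 : 0 < β := by linarith
  -- Any `lam ∈ ((d - α) / β, 1)` makes the exponent `β * lam + (α - d)` of the scales positive.
  set lam := (1 + (d - α) / β) / 2
  have hdαβ : (d - α) / β < 1 := (div_lt_one hβ0).2 hβ
  have hdαβ0 : 0 < (d - α) / β := div_pos (by linarith) hβ0
  have hlam1 : lam < 1 := by simp only [lam]; linarith
  have he : 0 < β * lam + (α - d) := by
    have : β * lam = (β + (d - α)) / 2 := by simp only [lam]; field_simp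
    linarith
  set q : ℝ := 2 ^ (-(β * lam + (α - d)) / 2)
  have hq0 : 0 < q := by positivity
  have hq1 : q < 1 := Real.rpow_lt_one_of_one_lt_of_neg one_lt_two (by linarith)
  have hq : 0 < 1 - q := by linarith
  have hlam : 0 < 1 - lam := by linarith
  have := omegaConst_pos hβ0
  have := rieszConst_pos hα hαd
  set c₀ := omegaConst β * 3 ^ (β * lam) * 2 ^ (-(α - d)) * (rieszConst d α)⁻¹ / (1 - lam)
  refine ⟨c₀ / (1 - q) ^ 2, by positivity, fun D hD z Ω f hf hΩ hfD => ?_⟩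
  -- With the weights `(1 - q) q ^ k`, the terms `(q ^ k) ^ 2 / θ k` below are geometric.
  have hθsum : ∑' k, ENNReal.ofReal ((1 - q) * q ^ k) ≤ 1 := by
    rw [tsum_ofReal_mul_pow hq.le hq0.le hq1, div_self hq.ne', ENNReal.ofReal_one]
  have hsum : ∑' k : ℕ, ENNReal.ofReal (c₀ * D ^ (β + α - d) * (q ^ k) ^ 2 / ((1 - q) * q ^ k)) =
      ENNReal.ofReal (c₀ / (1 - q) ^ 2 * D ^ (β + α - d)) := by
    have hterm : ∀ k : ℕ, c₀ * D ^ (β + α - d) * (q ^ k) ^ 2 / ((1 - q) * q ^ k) =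
        c₀ * D ^ (β + α - d) / (1 - q) * q ^ k := fun k => by
      field_simp
    simp_rw [hterm]
    rw [tsum_ofReal_mul_pow (by positivity) hq0.le hq1]
    congr 1
    field_simp
  refine (choquet_abs_rieszR_le_tsum hα hαd hβ0 (by positivity) hlam1
    (fun k => by positivity) hθsum hD hf hΩ hfD).trans_eq ?_
  rw [ENNReal.tsum_mul_right]
  exact congrArg (· * _) hsum

lemma dist_lt_of_mem_cubeO {d : ℕ} (hd : 0 < d) {a : Fin d → ℝ} {l : ℝ} (hl : 0 < l)
    {x y : Rd d} (hx : x ∈ cubeO d a l) (hy : y ∈ cubeO d (fun i => a i - l / 2) (2 * l)) :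
    dist x y < 2 * √d * l := by
  have hcoord : ∀ i, |x i - y i| ≤ 3 * l / 2 := fun i => by
    have := hx i
    have := hy i
    rw [abs_le]
    constructor <;> linarith
  have hsqrt : 0 < √(d : ℝ) := Real.sqrt_pos.2 (by exact_mod_cast hd)
  calc dist x y ≤ √d * (3 * l / 2) := by
        simpa using EuclideanSpace.dist_le_sqrt_card_mul (by positivity) hcoord
    _ < 2 * √d * l := by nlinarith

lemma lintegral_le_mul_fracMaxF {d : ℕ} {α : ℝ} {f : Rd d → ℝ} {b : Fin d → ℝ} {s : ℝ}
    (hs : 0 < s) {x : Rd d} (hx : x ∈ cubeSet d b s) (hf : Function.support f ⊆ cubeSet d b s) :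
    ∫⁻ y, ENNReal.ofReal |f y| ≤ ENNReal.ofReal (s ^ (d - α)) * fracMaxF d α f x := by
  have hM : (∫⁻ y, ENNReal.ofReal |f y|) * ENNReal.ofReal (s ^ (α - d)) ≤ fracMaxF d α f x := by
    rw [← setLIntegral_eq_of_support_subset fun y hy => hf fun h => hy (by simp [h])]
    exact le_iSup₂_of_le b s (le_iSup₂_of_le hs hx le_rfl)
  calc ∫⁻ y, ENNReal.ofReal |f y|
      = ENNReal.ofReal (s ^ (d - α)) *
          ((∫⁻ y, ENNReal.ofReal |f y|) * ENNReal.ofReal (s ^ (α - d))) := by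
        rw [mul_left_comm, ← ENNReal.ofReal_mul (by positivity), ← Real.rpow_add hs,
          sub_add_sub_cancel, sub_self, Real.rpow_zero, ENNReal.ofReal_one, mul_one]
    _ ≤ ENNReal.ofReal (s ^ (d - α)) * fracMaxF d α f x := mul_le_mul_right hM _

lemma center_mem_cubeO_double {d : ℕ} (a : Fin d → ℝ) {l : ℝ} (hl : 0 < l) :
    toRd d (fun i => a i + l / 2) ∈ cubeO d (fun i => a i - l / 2) (2 * l) := fun i => by
  simp only [toRd]
  constructor <;> linarith

lemma lintegral_enorm_le_fracMaxF_center {d : ℕ} {α : ℝ} {f : Rd d → ℝ} (a : Fin d → ℝ) {l : ℝ}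
    (hl : 0 < l) (hf : Function.support f ⊆ cubeO d (fun i => a i - l / 2) (2 * l)) :
    ∫⁻ y, ‖f y‖ₑ ≤
      ENNReal.ofReal ((2 * l) ^ (d - α)) * fracMaxF d α f (toRd d fun i => a i + l / 2) := by
  have hcube : cubeO d (fun i => a i - l / 2) (2 * l) ⊆ cubeSet d (fun i => a i - l / 2) (2 * l) :=
    fun y hy i => ⟨(hy i).1.le, (hy i).2.le⟩
  simp_rw [Real.enorm_eq_ofReal_abs]
  exact lintegral_le_mul_fracMaxF (by positivity) (hcube (center_mem_cubeO_double a hl))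
    (hf.trans hcube)

theorem riesz_local_estimate_general (d : ℕ) (α β : ℝ) (hα : 0 < α) (hαd : α < d)
    (hβ : (d : ℝ) - α < β) :
    ∃ C : ℝ, 0 < C ∧
      ∀ (a : Fin d → ℝ) (l : ℝ), 0 < l →
        ∀ f : Rd d → ℝ, Measurable f →
          Function.support f ⊆ cubeO d (fun i => a i - l / 2) (2 * l) →
          choquet d (hContent d β) (cubeO d a l) (fun y => |rieszR d α f y|) ≤
            ENNReal.ofReal (C * l ^ β) * fracMaxF d α f (toRd d fun i => a i + l / 2) := by
  obtain ⟨C, hC, hest⟩ := exists_choquet_abs_rieszR_le hα hαd hβ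
  have hd : 0 < d := by exact_mod_cast hα.trans hαd
  refine ⟨C * (2 * √d) ^ (β + α - d) * 2 ^ (d - α), by positivity,
    fun a l hl f hf hsupp => ?_⟩
  have hx₀ := center_mem_cubeO_double a hl
  calc choquet d (hContent d β) (cubeO d a l) (fun y => |rieszR d α f y|)
      ≤ ENNReal.ofReal (C * (2 * √d * l) ^ (β + α - d)) * ∫⁻ y, ‖f y‖ₑ :=
        hest _ (by positivity) _ _ f hf
          (fun x hx => Metric.mem_ball.2 (dist_lt_of_mem_cubeO hd hl hx hx₀))
          fun x hx y hy => dist_lt_of_mem_cubeO hd hl hx (hsupp hy)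
    _ ≤ ENNReal.ofReal (C * (2 * √d * l) ^ (β + α - d)) *
          (ENNReal.ofReal ((2 * l) ^ (d - α)) * fracMaxF d α f _) := by
        gcongr
        exact lintegral_enorm_le_fracMaxF_center a hl hsupp
    _ = ENNReal.ofReal (C * (2 * √d) ^ (β + α - d) * 2 ^ (d - α) * l ^ β) * fracMaxF d α f _ := by
        have hl' : l ^ (β + α - d) * l ^ (d - α) = l ^ β := by
          rw [← Real.rpow_add hl]; ring_nf
        rw [← mul_assoc, ← ENNReal.ofReal_mul (by positivity), Real.mul_rpow (by positivity) hl.le,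
          Real.mul_rpow (by positivity) hl.le, ← hl']
        congr 2
        ring

/-- Local estimate for Riesz potentials of data supported in the doubled cube. -/
theorem riesz_local_estimate (d : ℕ) (α β : ℝ) (hα : 0 < α) (hαd : α < d)
    (hβ : (d : ℝ) - α < β) (hβd : β ≤ d) :
    ∃ C : ℝ, 0 < C ∧
      ∀ (a : Fin d → ℝ) (l : ℝ), 0 < l →
        ∀ f : Rd d → ℝ, Measurable f →
          Function.support f ⊆ cubeO d (fun i => a i - l / 2) (2 * l) →
          choquet d (hContent d β) (cubeO d a l) (fun y => |rieszR d α f y|) ≤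
            ENNReal.ofReal (C * l ^ β) * fracMaxF d α f (toRd d fun i => a i + l / 2) :=
  riesz_local_estimate_general d α β hα hαd hβ
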